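/- Let y be obtained from a binary string x by deleting one symbol equal to 0 and one symbol equal to 1. If N_{0000}(x) − N_{0000}(y) ≡ 1 (mod 7) and N_{1111}(x) ≡ N_{1111}(y) (mod 7), then the string 1111 is preserved from x to y. -/

import Mathlib

/-- Delete from `x` the symbols at the positions in `S`. -/
def deleteIdxs (x : List Bool) (S : Finset ℕ) : List Bool :=
  ((List.range x.length).filter (fun i => decide (i ∉ S))).map (fun i => x.getD i false)

/-- `w` occurs in `x` at position `i`. -/
def occursAt (w x : List Bool) (i : ℕ) : Prop := w <+: x.drop i

/-- The number of (possibly overlapping) occurrences of `w` in `x`. -/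
def Nw (w x : List Bool) : ℕ :=
  ((Finset.range x.length).filter (fun i => w <+: x.drop i)).card

/-- The position in the shortened string of the junction produced by deleting position `k`. -/
def junction (S : Finset ℕ) (k : ℕ) : ℕ :=
  ((Finset.range k).filter (fun m => m ∉ S)).card

/-- `w` is preserved from `x` to `y`: some set `S` of deleted positions realizing `y`
destroys no occurrence of `w` in `x` and no occurrence of `w` in `y` spans a junction. -/
def Preserved (w x y : List Bool) : Prop :=
  ∃ S : Finset ℕ,
    (∀ k ∈ S, k < x.length) ∧
    S.card + y.length = x.length ∧
    deleteIdxs x S = y ∧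
    (∀ i, occursAt w x i → ∀ k ∈ S, ¬ (i ≤ k ∧ k < i + w.length)) ∧
    (∀ j, occursAt w y j → ∀ k ∈ S, ¬ (j < junction S k ∧ junction S k < j + w.length))

/-- `x` has a (maximal) run of length `ℓ` starting at position `i`. -/
def runAt (x : List Bool) (i ℓ : ℕ) : Prop :=
  0 < ℓ ∧ i + ℓ ≤ x.length ∧
  (∀ j, i ≤ j → j < i + ℓ → x.getD j false = x.getD i false) ∧
  (i = 0 ∨ x.getD (i - 1) false ≠ x.getD i false) ∧
  (i + ℓ = x.length ∨ x.getD (i + ℓ) false ≠ x.getD i false)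

/-- position `k` of `x` lies in a run of length `ℓ`. -/
def inRun (x : List Bool) (k ℓ : ℕ) : Prop := ∃ i, runAt x i ℓ ∧ i ≤ k ∧ k < i + ℓ

def w0000 : List Bool := [false, false, false, false]
def w1111 : List Bool := [true, true, true, true]
def w11011 : List Bool := [true, true, false, true, true]
def w110011 : List Bool := [true, true, false, false, true, true]

/-- The set of strings obtainable from `x` by deleting two symbols. -/
def D2 (x : List Bool) : Set (List Bool) :=
  { y | ∃ i j : ℕ, i < j ∧ j < x.length ∧ y = deleteIdxs x ({i, j} : Finset ℕ) }

/-- run-length representation of the runs of ones, in order. -/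
def tau1 (x : List Bool) : List ℕ :=
  ((x.splitBy (· == ·)).filter (fun r => r.headD false)).map List.length

/-- the subsequence of `tau1` of entries at least 2. -/
def tauGe2 (x : List Bool) : List ℕ := (tau1 x).filter (fun ℓ => decide (2 ≤ ℓ))

/-- sum of the odd-indexed entries. -/
def oddIdxSum (l : List ℕ) : ℕ :=
  ((Finset.range l.length).filter (fun i => i % 2 = 1)).sum (fun i => l.getD i 0)

/-!
Deleting the symbol at `k` changes `N_w` by the number of occurrences of `w` through `k` minus
the number of occurrences created across the junction; the latter is at most `|w| - 1`, and when
`w` is a run of the deleted symbol it is strictly smaller than the former unless both vanish.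

Delete the `0` first. Then `N₀₀₀₀(x) - N₀₀₀₀(y)` lies in `[-3, 4]`, so the congruence forces it
to be `1`, and some `0000` of `x` runs through the deleted `0`. That `0` therefore has a `0`
neighbour, so no `1111` straddles its junction, and `N₁₁₁₁(x) - N₁₁₁₁(y)` is the number of `1111`
through the deleted `1` minus those straddling its junction, a number in `[0, 4]`; the congruence
makes it `0`, so both counts vanish. Deleting the `1` first instead, `N₁₁₁₁(y) - N₁₁₁₁(x)` counts
the `1111` straddling either junction, at most `3 + 3 < 7`, so none straddles the junction of the
`0` either.
-/

open Finset

theorem List.getElem?_of_getD {x : List Bool} {k : ℕ} {b : Bool} (hk : k < x.length)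
    (h : x.getD k false = b) : x[k]? = some b := by
  rw [List.getElem?_eq_getElem hk, ← h, List.getD_eq_getElem _ _ hk]

theorem occursAt_iff {w x : List Bool} {i : ℕ} :
    occursAt w x i ↔ ∀ d (h : d < w.length), x[i + d]? = some w[d] := by
  simp only [occursAt, List.prefix_iff_getElem?, List.getElem?_drop]

theorem occursAt_replicate_iff {x : List Bool} {n i : ℕ} {b : Bool} :
    occursAt (List.replicate n b) x i ↔ ∀ d < n, x[i + d]? = some b := by
  simp [occursAt_iff]

theorem lt_length_of_occursAt {w x : List Bool} {i : ℕ} (hw : w ≠ []) (h : occursAt w x i) :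
    i < x.length := by
  have := h.length_le
  have := List.length_pos_iff.2 hw
  simp only [List.length_drop] at *
  omega

theorem occursAt_eraseIdx_iff_of_add_le {w x : List Bool} {j k : ℕ} (h : j + w.length ≤ k) :
    occursAt w (x.eraseIdx k) j ↔ occursAt w x j := by
  simp only [occursAt_iff, List.getElem?_eraseIdx]
  exact forall₂_congr fun d hd => by rw [if_pos (by omega)]

theorem occursAt_eraseIdx_iff_of_le {w x : List Bool} {j k : ℕ} (h : k ≤ j) :
    occursAt w (x.eraseIdx k) j ↔ occursAt w x (j + 1) := by
  simp only [occursAt_iff, List.getElem?_eraseIdx]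
  exact forall₂_congr fun d hd => by rw [if_neg (by omega), Nat.add_right_comm]

def occsCovering (w x : List Bool) (k : ℕ) : Finset ℕ :=
  (range x.length).filter (fun i => w <+: x.drop i ∧ i ≤ k ∧ k < i + w.length)

def occsStraddling (w x : List Bool) (k : ℕ) : Finset ℕ :=
  (range (x.eraseIdx k).length).filter
    (fun j => w <+: (x.eraseIdx k).drop j ∧ j < k ∧ k < j + w.length)

theorem mem_occsCovering {w x : List Bool} {k i : ℕ} (hw : w ≠ []) :
    i ∈ occsCovering w x k ↔ occursAt w x i ∧ i ≤ k ∧ k < i + w.length := by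
  rw [occsCovering, mem_filter, mem_range]
  exact ⟨fun h => h.2, fun h => ⟨lt_length_of_occursAt hw h.1, h⟩⟩

theorem mem_occsStraddling {w x : List Bool} {k j : ℕ} (hw : w ≠ []) :
    j ∈ occsStraddling w x k ↔ occursAt w (x.eraseIdx k) j ∧ j < k ∧ k < j + w.length := by
  rw [occsStraddling, mem_filter, mem_range]
  exact ⟨fun h => h.2, fun h => ⟨lt_length_of_occursAt hw h.1, h⟩⟩

theorem Nw_eq_card_add_card (w x : List Bool) (P : ℕ → Prop) [DecidablePred P] :
    Nw w x = #((range x.length).filter (fun i => w <+: x.drop i ∧ P i)) +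
      #((range x.length).filter (fun i => w <+: x.drop i ∧ ¬ P i)) := by
  rw [Nw, ← filter_filter, ← filter_filter, card_filter_add_card_filter_not]

theorem Nw_add_card_occsStraddling {w : List Bool} (hw : w ≠ []) (x : List Bool) (k : ℕ) :
    Nw w x + #(occsStraddling w x k) = Nw w (x.eraseIdx k) + #(occsCovering w x k) := by
  have hw' := List.length_pos_iff.2 hw
  have hkept : #((range x.length).filter
        (fun i => w <+: x.drop i ∧ ¬ (i ≤ k ∧ k < i + w.length))) =
      #((range (x.eraseIdx k).length).filter
        (fun j => w <+: (x.eraseIdx k).drop j ∧ ¬ (j < k ∧ k < j + w.length))) := by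
    refine card_bij' (fun i _ => if i ≤ k then i else i - 1)
      (fun j _ => if j < k then j else j + 1) ?_ ?_ ?_ ?_
    · intro i hi
      simp only [mem_filter, mem_range] at hi ⊢
      obtain ⟨-, hocc, hnot⟩ := hi
      have hocc' : occursAt w (x.eraseIdx k) (if i ≤ k then i else i - 1) := by
        split_ifs with hik
        · exact (occursAt_eraseIdx_iff_of_add_le (by omega)).2 hocc
        · exact (occursAt_eraseIdx_iff_of_le (by omega)).2 (by rwa [Nat.sub_add_cancel (by omega)])
      exact ⟨lt_length_of_occursAt hw hocc', hocc', by split_ifs <;> omega⟩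
    · intro j hj
      simp only [mem_filter, mem_range] at hj ⊢
      obtain ⟨-, hocc, hnot⟩ := hj
      have hocc' : occursAt w x (if j < k then j else j + 1) := by
        split_ifs with hjk
        · exact (occursAt_eraseIdx_iff_of_add_le (by omega)).1 hocc
        · exact (occursAt_eraseIdx_iff_of_le (by omega)).1 hocc
      exact ⟨lt_length_of_occursAt hw hocc', hocc', by split_ifs <;> omega⟩
    · intro i hi
      simp only [mem_filter] at hi
      split_ifs <;> omega
    · intro j _
      split_ifs <;> omega
  rw [Nw_eq_card_add_card w x (fun i => i ≤ k ∧ k < i + w.length),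
    Nw_eq_card_add_card w (x.eraseIdx k) (fun j => j < k ∧ k < j + w.length), hkept,
    occsCovering, occsStraddling]
  omega

theorem card_occsCovering_le (w x : List Bool) (k : ℕ) : #(occsCovering w x k) ≤ w.length := by
  have hsub : occsCovering w x k ⊆ Icc (k + 1 - w.length) k := by
    intro i hi
    simp only [occsCovering, mem_filter, mem_Icc] at hi ⊢
    omega
  have := card_le_card hsub
  rw [Nat.card_Icc] at this
  omega

theorem card_occsStraddling_le (w x : List Bool) (k : ℕ) :
    #(occsStraddling w x k) ≤ w.length - 1 := by
  have hsub : occsStraddling w x k ⊆ Ico (k + 1 - w.length) k := by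
    intro j hj
    simp only [occsStraddling, mem_filter, mem_Ico] at hj ⊢
    omega
  have := card_le_card hsub
  rw [Nat.card_Ico] at this
  omega

section Replicate

variable {x : List Bool} {n k : ℕ} {b : Bool}

theorem occsCovering_replicate_eq_empty (h : x[k]? ≠ some b) :
    occsCovering (List.replicate n b) x k = ∅ := by
  refine eq_empty_of_forall_notMem fun i hi => h ?_
  simp only [occsCovering, mem_filter, List.length_replicate] at hi
  obtain ⟨-, hocc, hik, hki⟩ := hi
  simpa [Nat.add_sub_cancel' hik] using occursAt_replicate_iff.1 hocc (k - i) (by omega)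

theorem getElem?_of_mem_occsStraddling_replicate (hk : x[k]? = some b) {j : ℕ}
    (hj : j ∈ occsStraddling (List.replicate n b) x k) :
    ∀ t, j ≤ t → t ≤ j + n → x[t]? = some b := by
  intro t hjt htj
  simp only [occsStraddling, mem_filter, List.length_replicate] at hj
  obtain ⟨-, hocc, hjk, hkj⟩ := hj
  have hrun := occursAt_replicate_iff.1 hocc
  rcases lt_trichotomy t k with htk | rfl | hkt
  · simpa [List.getElem?_eraseIdx, htk, Nat.add_sub_cancel' hjt] using hrun (t - j) (by omega)
  · exact hk
  · have := hrun (t - 1 - j) (by omega)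
    rwa [List.getElem?_eraseIdx, if_neg (by omega), show j + (t - 1 - j) + 1 = t by omega] at this

theorem occsStraddling_replicate_subset (hk : x[k]? = some b) :
    occsStraddling (List.replicate n b) x k ⊆ occsCovering (List.replicate n b) x k := by
  intro j hj
  have hrun := getElem?_of_mem_occsStraddling_replicate hk hj
  simp only [occsStraddling, mem_filter, List.length_replicate] at hj
  have hocc : occursAt (List.replicate n b) x j :=
    occursAt_replicate_iff.2 fun d hd => hrun _ (by omega) (by omega)
  exact (mem_occsCovering (by simp; omega)).2 ⟨hocc, by omega, by simp; omega⟩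

/-- The rightmost run through `k` is never a straddling one: a straddling run at `j` would
give a run at `j + 1` through `k`. -/
theorem card_occsStraddling_replicate_lt (hk : x[k]? = some b)
    (hne : (occsCovering (List.replicate n b) x k).Nonempty) :
    #(occsStraddling (List.replicate n b) x k) < #(occsCovering (List.replicate n b) x k) := by
  set M := (occsCovering (List.replicate n b) x k).max' hne
  have hsub : occsStraddling (List.replicate n b) x k ⊆
      (occsCovering (List.replicate n b) x k).erase M := by
    intro j hj
    have hrun := getElem?_of_mem_occsStraddling_replicate hk hj
    refine mem_erase.2 ⟨fun hjM => ?_, occsStraddling_replicate_subset hk hj⟩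
    simp only [occsStraddling, mem_filter, List.length_replicate] at hj
    have hocc : occursAt (List.replicate n b) x (j + 1) :=
      occursAt_replicate_iff.2 fun d hd => hrun _ (by omega) (by omega)
    have hmem : j + 1 ∈ occsCovering (List.replicate n b) x k :=
      (mem_occsCovering (by simp; omega)).2 ⟨hocc, by omega, by simp; omega⟩
    have := le_max' _ _ hmem
    omega
  calc #(occsStraddling (List.replicate n b) x k)
      ≤ #((occsCovering (List.replicate n b) x k).erase M) := card_le_card hsub
    _ < #(occsCovering (List.replicate n b) x k) := card_erase_lt_of_mem (max'_mem _ _)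

/-- A run of `c ≠ b` of length at least two through `k` puts a `c` next to `k`. -/
theorem occsStraddling_replicate_eq_empty {m : ℕ} {c : Bool} (hn : 2 ≤ n) (hcb : c ≠ b)
    (h : (occsCovering (List.replicate n c) x k).Nonempty) :
    occsStraddling (List.replicate m b) x k = ∅ := by
  obtain ⟨i, hi⟩ := h
  simp only [occsCovering, mem_filter, List.length_replicate] at hi
  obtain ⟨-, hocc, hik, hki⟩ := hi
  have hrun := occursAt_replicate_iff.1 hocc
  refine eq_empty_of_forall_notMem fun j hj => ?_
  simp only [occsStraddling, mem_filter, List.length_replicate] at hj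
  obtain ⟨-, hocc', hjk, hkj⟩ := hj
  have hrun' := occursAt_replicate_iff.1 hocc'
  rcases hik.lt_or_eq with hik | rfl
  · have hb := hrun' (k - 1 - j) (by omega)
    have hc := hrun (k - 1 - i) (by omega)
    rw [List.getElem?_eraseIdx, if_pos (by omega), show j + (k - 1 - j) = k - 1 by omega] at hb
    rw [show i + (k - 1 - i) = k - 1 by omega, hb] at hc
    exact hcb (Option.some_injective _ hc).symm
  · have hb := hrun' (i - j) (by omega)
    have hc := hrun 1 (by omega)
    rw [List.getElem?_eraseIdx, if_neg (by omega), show j + (i - j) + 1 = i + 1 by omega] at hb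
    rw [hb] at hc
    exact hcb (Option.some_injective _ hc).symm

end Replicate

theorem deleteIdxs_cons (c : Bool) (x : List Bool) (S T : Finset ℕ)
    (hST : ∀ i, i ∈ T ↔ i + 1 ∈ S) :
    deleteIdxs (c :: x) S = (if 0 ∈ S then [] else [c]) ++ deleteIdxs x T := by
  simp only [deleteIdxs, List.length_cons, List.range_succ_eq_map, List.filter_cons,
    List.filter_map]
  split_ifs <;> simp_all [Function.comp_def]

theorem deleteIdxs_empty (x : List Bool) : deleteIdxs x ∅ = x := by
  induction x with
  | nil => rfl
  | cons c x ih => simp [deleteIdxs_cons c x ∅ ∅ (by simp), ih]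

theorem deleteIdxs_singleton (x : List Bool) (j : ℕ) : deleteIdxs x {j} = x.eraseIdx j := by
  induction x generalizing j with
  | nil => rfl
  | cons c x ih =>
    cases j with
    | zero => simp [deleteIdxs_cons c x {0} ∅ (by simp), deleteIdxs_empty]
    | succ j => simp [deleteIdxs_cons c x {j + 1} {j} (by simp), ih]

theorem deleteIdxs_pair_eq_eraseIdx_eraseIdx (x : List Bool) {a b : ℕ} (hab : a ≠ b) :
    deleteIdxs x {a, b} = (x.eraseIdx a).eraseIdx (if a < b then b - 1 else b) := by
  induction x generalizing a b with
  | nil => rfl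
  | cons c x ih =>
    rcases a with _ | a <;> rcases b with _ | b
    · exact absurd rfl hab
    · simp [deleteIdxs_cons c x {0, b + 1} {b} (by simp), deleteIdxs_singleton]
    · simp [deleteIdxs_cons c x {a + 1, 0} {a} (by simp), deleteIdxs_singleton]
    · rw [deleteIdxs_cons c x {a + 1, b + 1} {a, b} (by simp), ih (by omega), if_neg (by simp)]
      split_ifs with h h' h' <;> try omega
      · obtain ⟨b, rfl⟩ : ∃ b', b = b' + 1 := ⟨b - 1, by omega⟩
        rfl
      · rfl

/-- For `a ≠ b`, `junction {a, b} b` is the index of `b` in `x.eraseIdx a`. -/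
theorem junction_pair (a b : ℕ) :
    junction {a, b} b = if a < b then b - 1 else b := by
  unfold junction
  split_ifs with h
  · rw [show (range b).filter (· ∉ ({a, b} : Finset ℕ)) = (range b).erase a by
        ext; simp; omega,
      card_erase_of_mem (mem_range.2 h), card_range]
  · rw [filter_true_of_mem fun m hm => by simp at hm ⊢; omega, card_range]

theorem deleteIdxs_pair (x : List Bool) {a b : ℕ} (hab : a ≠ b) :
    deleteIdxs x {a, b} = (x.eraseIdx a).eraseIdx (junction {a, b} b) := by
  rw [junction_pair a b, deleteIdxs_pair_eq_eraseIdx_eraseIdx x hab]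

theorem getElem?_eraseIdx_junction (x : List Bool) {a b : ℕ} (hab : a ≠ b) :
    (x.eraseIdx a)[junction {a, b} b]? = x[b]? := by
  rw [junction_pair a b, List.getElem?_eraseIdx]
  split_ifs <;> congr 1 <;> omega

theorem length_deleteIdxs_pair {x : List Bool} {a b : ℕ} (hab : a ≠ b) (ha : a < x.length)
    (hb : b < x.length) : (deleteIdxs x {a, b}).length = x.length - 2 := by
  rw [deleteIdxs_pair x hab, junction_pair a b]
  simp only [List.length_eraseIdx]
  split_ifs <;> omega

theorem Nw_deleteIdxs_pair {w : List Bool} (hw : w ≠ []) (x : List Bool) {a b : ℕ}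
    (hab : a ≠ b) :
    Nw w x + #(occsStraddling w x a) + #(occsStraddling w (x.eraseIdx a) (junction {a, b} b)) =
      Nw w (deleteIdxs x {a, b}) + #(occsCovering w x a) +
        #(occsCovering w (x.eraseIdx a) (junction {a, b} b)) := by
  have h₁ := Nw_add_card_occsStraddling hw x a
  have h₂ := Nw_add_card_occsStraddling hw (x.eraseIdx a) (junction {a, b} b)
  rw [← deleteIdxs_pair x hab] at h₂
  omega

theorem occsCovering_replicate_eq_empty_of_eraseIdx {x : List Bool} {a b n : ℕ} {c : Bool}
    (hxa : x[a]? ≠ some c)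
    (h : occsCovering (List.replicate n c) (x.eraseIdx a) (junction {a, b} b) = ∅) :
    occsCovering (List.replicate n c) x b = ∅ := by
  refine eq_empty_of_forall_notMem fun i hi => ?_
  simp only [occsCovering, mem_filter, List.length_replicate] at hi
  obtain ⟨-, hocc, hib, hbi⟩ := hi
  have hai : ¬ (i ≤ a ∧ a < i + n) := fun ⟨hia, hai⟩ => hxa <| by
    simpa [Nat.add_sub_cancel' hia] using occursAt_replicate_iff.1 hocc (a - i) (by omega)
  have hocc' : occursAt (List.replicate n c) (x.eraseIdx a) (if a < i then i - 1 else i) := by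
    split_ifs with h
    · exact (occursAt_eraseIdx_iff_of_le (by omega)).2 (by rwa [Nat.sub_add_cancel (by omega)])
    · exact (occursAt_eraseIdx_iff_of_add_le (by simp; omega)).2 hocc
  have hmem : (if a < i then i - 1 else i) ∈
      occsCovering (List.replicate n c) (x.eraseIdx a) (junction {a, b} b) := by
    refine (mem_occsCovering (by simp; omega)).2 ⟨hocc', ?_⟩
    rw [junction_pair, List.length_replicate]
    split_ifs <;> omega
  simp [h] at hmem

theorem preserved_deleteIdxs_pair {w x : List Bool} {a b : ℕ} (hw : w ≠ []) (hab : a ≠ b)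
    (ha : a < x.length) (hb : b < x.length)
    (hca : occsCovering w x a = ∅) (hcb : occsCovering w x b = ∅)
    (hsa : occsStraddling w (x.eraseIdx b) (junction {a, b} a) = ∅)
    (hsb : occsStraddling w (x.eraseIdx a) (junction {a, b} b) = ∅) :
    Preserved w x (deleteIdxs x {a, b}) := by
  have hy : deleteIdxs x {a, b} = (x.eraseIdx b).eraseIdx (junction {a, b} a) := by
    rw [pair_comm]
    exact deleteIdxs_pair x hab.symm
  refine ⟨{a, b}, by simp [ha, hb], ?_, rfl, ?_, ?_⟩
  · rw [card_pair hab, length_deleteIdxs_pair hab ha hb]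
    omega
  · intro i hi k hk hik
    rcases mem_insert.1 hk with rfl | hk
    · simpa [hca] using (mem_occsCovering hw).2 ⟨hi, hik⟩
    · rw [mem_singleton.1 hk] at hik
      simpa [hcb] using (mem_occsCovering hw).2 ⟨hi, hik⟩
  · intro j hj k hk hjk
    rcases mem_insert.1 hk with rfl | hk
    · rw [hy] at hj
      simpa [hsa] using (mem_occsStraddling hw).2 ⟨hj, hjk⟩
    · rw [mem_singleton.1 hk] at hjk
      rw [deleteIdxs_pair x hab] at hj
      simpa [hsb] using (mem_occsStraddling hw).2 ⟨hj, hjk⟩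

section Counting

variable {x : List Bool} {a b : ℕ}

theorem occsCovering_w0000_nonempty (hab : a ≠ b) (hxa : x[a]? = some false)
    (hxb : x[b]? = some true) (hm : Nw w0000 x ≡ Nw w0000 (deleteIdxs x {a, b}) + 1 [MOD 7]) :
    (occsCovering w0000 x a).Nonempty := by
  rw [show w0000 = List.replicate 4 false from rfl] at hm ⊢
  have hcount := Nw_deleteIdxs_pair (w := List.replicate 4 false) (by simp) x hab
  rw [occsCovering_replicate_eq_empty (x := x.eraseIdx a) (k := junction {a, b} b)
    (by simp [getElem?_eraseIdx_junction x hab, hxb])] at hcount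
  have hsc := card_le_card (occsStraddling_replicate_subset (n := 4) hxa)
  have hc := card_occsCovering_le (List.replicate 4 false) x a
  have hs := card_occsStraddling_le (List.replicate 4 false) (x.eraseIdx a) (junction {a, b} b)
  simp only [List.length_replicate] at hc hs
  rw [← card_pos]
  unfold Nat.ModEq at hm
  simp only [card_empty] at hcount
  omega

theorem occsCovering_w1111_eraseIdx_eq_empty (hab : a ≠ b) (hxa : x[a]? = some false)
    (hxb : x[b]? = some true) (hs : occsStraddling w1111 x a = ∅)
    (hm : Nw w1111 x ≡ Nw w1111 (deleteIdxs x {a, b}) [MOD 7]) :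
    occsCovering w1111 (x.eraseIdx a) (junction {a, b} b) = ∅ := by
  rw [show w1111 = List.replicate 4 true from rfl] at hm hs ⊢
  have hxb' : (x.eraseIdx a)[junction {a, b} b]? = some true := by
    rw [getElem?_eraseIdx_junction x hab, hxb]
  have hcount := Nw_deleteIdxs_pair (w := List.replicate 4 true) (by simp) x hab
  rw [hs, occsCovering_replicate_eq_empty (by simp [hxa])] at hcount
  have hsc := card_le_card (occsStraddling_replicate_subset (n := 4) hxb')
  have hc := card_occsCovering_le (List.replicate 4 true) (x.eraseIdx a) (junction {a, b} b)
  simp only [List.length_replicate] at hc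
  by_contra hne
  have hlt := card_occsStraddling_replicate_lt hxb' (nonempty_iff_ne_empty.2 hne)
  unfold Nat.ModEq at hm
  simp only [card_empty] at hcount
  omega

theorem occsStraddling_w1111_eraseIdx_eq_empty (hab : a ≠ b) (hxb : x[b]? = some false)
    (hc : occsCovering w1111 x a = ∅)
    (hm : Nw w1111 x ≡ Nw w1111 (deleteIdxs x {a, b}) [MOD 7]) :
    occsStraddling w1111 (x.eraseIdx a) (junction {a, b} b) = ∅ := by
  rw [show w1111 = List.replicate 4 true from rfl] at hm hc ⊢
  have hcount := Nw_deleteIdxs_pair (w := List.replicate 4 true) (by simp) x hab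
  rw [hc, occsCovering_replicate_eq_empty (by simp [getElem?_eraseIdx_junction x hab, hxb])]
    at hcount
  have hs := card_occsStraddling_le (List.replicate 4 true) x a
  have hs' := card_occsStraddling_le (List.replicate 4 true) (x.eraseIdx a) (junction {a, b} b)
  simp only [List.length_replicate] at hs hs'
  rw [← card_eq_zero]
  unfold Nat.ModEq at hm
  simp only [card_empty] at hcount
  omega

end Counting

/-- If a `0` and a `1` are deleted with `N₀₀₀₀(x) - N₀₀₀₀(y) ≡ 1 (mod 7)` and
`N₁₁₁₁(x) ≡ N₁₁₁₁(y) (mod 7)`, then `1111` is preserved. -/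
theorem zero_one_1111_preserved (x y : List Bool) (k₀ k₁ : ℕ) (hne : k₀ ≠ k₁)
    (h0 : k₀ < x.length) (h1 : k₁ < x.length)
    (hv0 : x.getD k₀ false = false) (hv1 : x.getD k₁ false = true)
    (hy : y = deleteIdxs x ({k₀, k₁} : Finset ℕ))
    (hm0 : Nw w0000 x ≡ Nw w0000 y + 1 [MOD 7])
    (hm1 : Nw w1111 x ≡ Nw w1111 y [MOD 7]) :
    Preserved w1111 x y := by
  subst hy
  have hx₀ := List.getElem?_of_getD h0 hv0
  have hx₁ := List.getElem?_of_getD h1 hv1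
  have hcov₀ := occsCovering_w0000_nonempty hne hx₀ hx₁ hm0
  have hstr₀ : occsStraddling w1111 x k₀ = ∅ :=
    occsStraddling_replicate_eq_empty (n := 4) (m := 4) (by norm_num) Bool.false_ne_true hcov₀
  have hcov₁' := occsCovering_w1111_eraseIdx_eq_empty hne hx₀ hx₁ hstr₀ hm1
  have hcov₁ : occsCovering w1111 x k₁ = ∅ :=
    occsCovering_replicate_eq_empty_of_eraseIdx (n := 4) (by simp [hx₀]) hcov₁'
  have hstr₁' : occsStraddling w1111 (x.eraseIdx k₀) (junction {k₀, k₁} k₁) = ∅ :=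
    subset_empty.1 <| hcov₁' ▸ occsStraddling_replicate_subset (n := 4)
      (by rw [getElem?_eraseIdx_junction x hne, hx₁])
  have hstr₁ : occsStraddling w1111 (x.eraseIdx k₁) (junction {k₀, k₁} k₀) = ∅ := by
    rw [pair_comm] at hm1 ⊢
    exact occsStraddling_w1111_eraseIdx_eq_empty hne.symm hx₀ hcov₁ hm1
  exact preserved_deleteIdxs_pair (by decide) hne h0 h1
    (occsCovering_replicate_eq_empty (n := 4) (by simp [hx₀])) hcov₁ hstr₁ hstr₁'
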